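/- Separation of sensor and actuator attacks (Corollary 1, abstract form): Let P, A_s, A_a ⊆ W × W be relations with K ⊆ W. Assume every k ∈ K is in the domain of P ∘ A_s and in the range of A_a, and that (A_a⁻¹ ∘ A_a)(K) ⊆ K. Define S = (P ∘ A_s)⁻¹ ∘ Id_K ∘ A_a⁻¹. Then {v : ∃ k ∈ K, (k,v) ∈ P ∘ A_s ∘ S ∘ A_a} = K, i.e., the closed-loop image of K equals K, independent of the sensor attack A_s. -/
import Mathlib


def rcomp {α β γ : Type*} (R : Set (α × β)) (S : Set (β × γ)) : Set (α × γ) :=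
  {p | ∃ b, (p.1, b) ∈ R ∧ (b, p.2) ∈ S}

def rinv {α β : Type*} (R : Set (α × β)) : Set (β × α) :=
  {p | (p.2, p.1) ∈ R}

def rimg {α β : Type*} (R : Set (α × β)) (X : Set α) : Set β :=
  {b | ∃ a ∈ X, (a, b) ∈ R}

def idOn {α : Type*} (K : Set α) : Set (α × α) :=
  {p | p.1 = p.2 ∧ p.1 ∈ K}

theorem stmt15 {W : Type*} (P As Aa : Set (W × W)) (K : Set W)
    (ha : ∀ k ∈ K, ∃ v, (k, v) ∈ rcomp P As)
    (hb : ∀ k ∈ K, ∃ w, (w, k) ∈ Aa)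
    (hc : rimg (rcomp (rinv Aa) Aa) K ⊆ K) :
    rimg (rcomp (rcomp (rcomp P As)
        (rcomp (rcomp (rinv (rcomp P As)) (idOn K)) (rinv Aa))) Aa) K = K := by
  ext v
  simp only [rimg, rcomp, rinv, idOn, Set.mem_setOf_eq]
  constructor
  · rintro ⟨k, hk, c, ⟨b, hb1, k', ⟨k'', hk'', rfl, hkK⟩, hck⟩, hcv⟩
    exact hc ⟨k'', hkK, c, hck, hcv⟩
  · intro hv
    obtain ⟨b, hb1⟩ := ha v hv
    obtain ⟨c, hc1⟩ := hb v hv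
    exact ⟨v, hv, c, ⟨b, hb1, v, ⟨v, hb1, rfl, hv⟩, hc1⟩, hc1⟩
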